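/- Define $u(z)=\sum_{j=1}^\infty \max\left(\frac{1}{2^j}\log\frac{|z_1-2^{-j}|}{|1-2^{-j}z_1|},\; \frac{2^j}{j}\log|z_2|,\; \log|z_3|,\dots,\log|z_n|,\; -2^j\right)$ on the unit polydisc $\Delta^n$ (with $n\ge 2$). Then $u(z)>-\infty$ for every $z\in\Delta^n$ (the series converges). -/

import Mathlib

/-!
Every term is a maximum containing `-2^j`, so it is finite, and every entry of the maximum is
`≤ 0` on the closed polydisc; hence the partial sums decrease and it suffices to bound the terms
from below by a summable sequence. The first entry does this: as `j → ∞` the Möbius distance from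
`z₁` to `2^{-j}` tends to `|z₁|`, so it eventually exceeds `2^{-j}` (trivially when `z₁ = 0`,
where it equals `2^{-j}`), and then the `j`-th term is at least `2^{-j} log 2^{-j} = -j 2^{-j} log 2`.
-/

open Filter Topology

noncomputable section

/-- Extended logarithm: `elog 0 = ⊥`. -/
def elog (x : ℝ) : EReal := if x = 0 then ⊥ else ((Real.log x : ℝ) : EReal)

/-- The `j`-th term of the series defining `u`:
`max( 2^{-j} log (|z₁-2^{-j}|/|1-2^{-j}z₁|), (2^j/j) log|z₂|, log|z₃|, …, log|z_n|, -2^j )`,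
with values in `EReal` (so that `log 0 = -∞`). -/
def term9 {n : ℕ} (hn : 2 ≤ n) (z : Fin n → ℂ) (j : ℕ) : EReal :=
  max
    (max
      ((((1 : ℝ) / 2 ^ j : ℝ) : EReal) *
        elog (‖z ⟨0, by omega⟩ - (1 : ℂ) / 2 ^ j‖ /
              ‖1 - z ⟨0, by omega⟩ / 2 ^ j‖))
      ((((2 : ℝ) ^ j / j : ℝ) : EReal) * elog (‖z ⟨1, by omega⟩‖)))
    (max
      (⨆ i : Fin n, if 2 ≤ (i : ℕ) then elog ‖z i‖ else ⊥)
      (((-(2 : ℝ) ^ j : ℝ) : EReal)))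

open Finset Complex ComplexConjugate

lemma EReal.coe_finset_sum {ι : Type*} (s : Finset ι) (f : ι → ℝ) :
    ((∑ i ∈ s, f i : ℝ) : EReal) = ∑ i ∈ s, (f i : EReal) :=
  map_sum (⟨⟨Real.toEReal, EReal.coe_zero⟩, EReal.coe_add⟩ : ℝ →+ EReal) f s

lemma EReal.tendsto_sum_range_coe {f : ℕ → ℝ} (hf : Summable f) :
    Tendsto (fun N => ∑ j ∈ range N, (f j : EReal)) atTop (𝓝 ((∑' j, f j : ℝ) : EReal)) := by
  simpa only [EReal.coe_finset_sum] using EReal.tendsto_coe.mpr hf.hasSum.tendsto_sum_nat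

lemma Summable.of_nonpos_of_eventually_le {f g : ℕ → ℝ} (hg : Summable g) (hf : ∀ j, f j ≤ 0)
    (hgf : ∀ᶠ j in atTop, g j ≤ f j) : Summable f :=
  hg.neg.of_norm_bounded_eventually_nat <| hgf.mono fun j hj => by
    rw [Real.norm_of_nonpos (hf j)]
    exact neg_le_neg hj

lemma elog_of_pos {x : ℝ} (hx : 0 < x) : elog x = Real.log x := if_neg hx.ne'

lemma elog_nonpos {x : ℝ} (hx₀ : 0 ≤ x) (hx₁ : x ≤ 1) : elog x ≤ 0 := by
  unfold elog
  split_ifs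
  · exact bot_le
  · exact_mod_cast Real.log_nonpos hx₀ hx₁

lemma coe_mul_elog_nonpos {c x : ℝ} (hc : 0 ≤ c) (hx₀ : 0 ≤ x) (hx₁ : x ≤ 1) :
    (c : EReal) * elog x ≤ 0 :=
  mul_nonpos_of_nonneg_of_nonpos (EReal.coe_nonneg.mpr hc) (elog_nonpos hx₀ hx₁)

def mobiusDist (a z : ℂ) : ℝ := ‖z - a‖ / ‖1 - conj a * z‖

lemma normSq_one_sub_conj_mul_sub_normSq_sub (a z : ℂ) :
    normSq (1 - conj a * z) - normSq (z - a) = (1 - normSq a) * (1 - normSq z) := by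
  simp only [normSq_apply, sub_re, sub_im, mul_re, mul_im, conj_re, conj_im, one_re, one_im]
  ring

lemma mobiusDist_le_one {a z : ℂ} (ha : ‖a‖ ≤ 1) (hz : ‖z‖ ≤ 1) : mobiusDist a z ≤ 1 := by
  refine div_le_one_of_le₀ ?_ (norm_nonneg _)
  refine (sq_le_sq₀ (norm_nonneg _) (norm_nonneg _)).mp ?_
  have h := normSq_one_sub_conj_mul_sub_normSq_sub a z
  rw [← Complex.sq_norm a, ← Complex.sq_norm z] at h
  rw [Complex.sq_norm, Complex.sq_norm]
  linarith [mul_nonneg (sub_nonneg.mpr (pow_le_one₀ (n := 2) (norm_nonneg a) ha))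
    (sub_nonneg.mpr (pow_le_one₀ (n := 2) (norm_nonneg z) hz))]

lemma mobiusDist_zero_right (a : ℂ) : mobiusDist a 0 = ‖a‖ := by
  simp [mobiusDist]

lemma tendsto_mobiusDist_nhds_zero (z : ℂ) :
    Tendsto (fun a => mobiusDist a z) (𝓝 0) (𝓝 ‖z‖) := by
  have h : ContinuousAt (fun a => mobiusDist a z) 0 :=
    ContinuousAt.div (by fun_prop) (by fun_prop) (by simp)
  simpa [mobiusDist] using h.tendsto

lemma Filter.Tendsto.eventually_norm_le_mobiusDist {ι : Type*} {l : Filter ι} {a : ι → ℂ}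
    (ha : Tendsto a l (𝓝 0)) (z : ℂ) : ∀ᶠ i in l, ‖a i‖ ≤ mobiusDist (a i) z := by
  rcases eq_or_ne z 0 with rfl | hz
  · exact Eventually.of_forall fun i => (mobiusDist_zero_right (a i)).ge
  · have hnorm : Tendsto (fun i => ‖a i‖) l (𝓝 0) := by simpa using ha.norm
    exact (hnorm.eventually_lt ((tendsto_mobiusDist_nhds_zero z).comp ha)
      (norm_pos_iff.mpr hz)).mono fun i => le_of_lt

lemma mobiusDist_one_div_two_pow (j : ℕ) (z : ℂ) :
    mobiusDist (1 / 2 ^ j) z = ‖z - 1 / 2 ^ j‖ / ‖1 - z / 2 ^ j‖ := by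
  simp [mobiusDist, map_ofNat, div_eq_inv_mul]

lemma norm_one_div_two_pow (j : ℕ) : ‖(1 : ℂ) / 2 ^ j‖ = 1 / 2 ^ j := by
  simp

section term9

variable {n : ℕ} (hn : 2 ≤ n) (z : Fin n → ℂ)

lemma coe_mul_elog_mobiusDist_le_term9 (j : ℕ) :
    ((1 / 2 ^ j : ℝ) : EReal) * elog (mobiusDist (1 / 2 ^ j) (z ⟨0, by omega⟩)) ≤ term9 hn z j := by
  rw [mobiusDist_one_div_two_pow]
  exact le_max_of_le_left (le_max_left _ _)

lemma neg_two_pow_le_term9 (j : ℕ) : ((-(2 : ℝ) ^ j : ℝ) : EReal) ≤ term9 hn z j :=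
  le_max_of_le_right (le_max_right _ _)

variable {z}

lemma term9_nonpos (hz : ∀ i, ‖z i‖ ≤ 1) (j : ℕ) : term9 hn z j ≤ 0 := by
  refine max_le (max_le ?_ ?_) (max_le ?_ ?_)
  · have ha : ‖(1 : ℂ) / 2 ^ j‖ ≤ 1 := by
      rw [norm_one_div_two_pow]
      exact div_le_one_of_le₀ (one_le_pow₀ one_le_two) (by positivity)
    rw [← mobiusDist_one_div_two_pow]
    exact coe_mul_elog_nonpos (by positivity) (by unfold mobiusDist; positivity)
      (mobiusDist_le_one ha (hz _))
  · exact coe_mul_elog_nonpos (by positivity) (norm_nonneg _) (hz _)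
  · refine iSup_le fun i => ?_
    split_ifs
    · exact elog_nonpos (norm_nonneg _) (hz i)
    · exact bot_le
  · exact_mod_cast (neg_nonpos.mpr (pow_nonneg zero_le_two j : (0 : ℝ) ≤ 2 ^ j))

lemma coe_toReal_term9 (hz : ∀ i, ‖z i‖ ≤ 1) (j : ℕ) :
    ((term9 hn z j).toReal : EReal) = term9 hn z j :=
  EReal.coe_toReal (ne_top_of_le_ne_top EReal.zero_ne_top (term9_nonpos hn hz j))
    (ne_bot_of_le_ne_bot (EReal.coe_ne_bot _) (neg_two_pow_le_term9 hn z j))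

lemma eventually_le_toReal_term9 (hz : ∀ i, ‖z i‖ ≤ 1) :
    ∀ᶠ j : ℕ in atTop, -Real.log 2 * (j * (1 / 2) ^ j) ≤ (term9 hn z j).toReal := by
  have htends : Tendsto (fun j : ℕ => (1 : ℂ) / 2 ^ j) atTop (𝓝 0) := by
    simpa only [one_div_pow] using tendsto_pow_atTop_nhds_zero_of_norm_lt_one (x := (1 / 2 : ℂ))
      (by norm_num)
  filter_upwards [htends.eventually_norm_le_mobiusDist (z ⟨0, by omega⟩)] with j hj
  rw [norm_one_div_two_pow] at hj
  have hpos : 0 < mobiusDist (1 / 2 ^ j) (z ⟨0, by omega⟩) := lt_of_lt_of_le (by positivity) hj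
  rw [← EReal.coe_le_coe_iff, coe_toReal_term9 hn hz]
  refine le_trans ?_ (coe_mul_elog_mobiusDist_le_term9 hn z j)
  rw [elog_of_pos hpos, ← EReal.coe_mul, EReal.coe_le_coe_iff]
  calc -Real.log 2 * (j * (1 / 2) ^ j) = 1 / 2 ^ j * Real.log (1 / 2 ^ j) := by
        rw [one_div_pow, Real.log_div one_ne_zero (by positivity), Real.log_one, Real.log_pow]
        ring
    _ ≤ 1 / 2 ^ j * Real.log (mobiusDist (1 / 2 ^ j) (z ⟨0, by omega⟩)) := by
        gcongr

lemma summable_toReal_term9 (hz : ∀ i, ‖z i‖ ≤ 1) : Summable fun j => (term9 hn z j).toReal := by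
  have hg : Summable fun j : ℕ => -Real.log 2 * (j * (1 / 2 : ℝ) ^ j) :=
    ((hasSum_coe_mul_geometric_of_norm_lt_one (r := (1 / 2 : ℝ)) (by norm_num)).summable).mul_left _
  refine hg.of_nonpos_of_eventually_le (fun j => ?_) (eventually_le_toReal_term9 hn hz)
  exact EReal.toReal_nonpos (term9_nonpos hn hz j)

end term9

/-- The series `u(z) = ∑_{j≥1} term9 j z` converges to a finite value (`u(z) > -∞`)
at every point of the unit polydisc. -/
theorem stmt9 (n : ℕ) (hn : 2 ≤ n) (z : Fin n → ℂ)
    (hz : ∀ i, ‖z i‖ < 1) :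
    ∃ L : ℝ, Tendsto (fun N => ∑ j ∈ Finset.range N, term9 hn z (j + 1))
      atTop (𝓝 ((L : ℝ) : EReal)) := by
  have hz' : ∀ i, ‖z i‖ ≤ 1 := fun i => (hz i).le
  have hsum := (summable_nat_add_iff 1).mpr (summable_toReal_term9 hn hz')
  refine ⟨∑' j, (term9 hn z (j + 1)).toReal, ?_⟩
  simpa only [coe_toReal_term9 hn hz'] using EReal.tendsto_sum_range_coe hsum
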